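/- Let E be an Archimedean uniformly complete vector lattice with a strong unit. A prime ideal P of E is a maximal ideal if and only if the quotient vector space E/P is finite-dimensional. -/

import Mathlib

/-- An (order) ideal of the vector lattice `E`: a solid linear subspace. -/
def IsIdeal {E : Type*} [Lattice E] [AddCommGroup E] [Module ℝ E]
    (I : Submodule ℝ E) : Prop :=
  ∀ x y : E, |x| ≤ |y| → y ∈ I → x ∈ I

/-- A prime ideal: a proper ideal `P` such that `x ⊓ y ∈ P` implies `x ∈ P` or `y ∈ P`. -/
def IsPrimeIdeal {E : Type*} [Lattice E] [AddCommGroup E] [Module ℝ E]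
    (P : Submodule ℝ E) : Prop :=
  IsIdeal P ∧ P ≠ ⊤ ∧ ∀ x y : E, x ⊓ y ∈ P → x ∈ P ∨ y ∈ P

/-- A principal ideal: `I = {y : |y| ≤ c • x for some scalar c ≥ 0}` for some `x ≥ 0`. -/
def IsPrincipalIdeal {E : Type*} [Lattice E] [AddCommGroup E] [Module ℝ E]
    (I : Submodule ℝ E) : Prop :=
  ∃ x : E, 0 ≤ x ∧ ∀ y : E, y ∈ I ↔ ∃ c : ℝ, 0 ≤ c ∧ |y| ≤ c • x

/-- A maximal ideal: a proper ideal `M` such that any ideal between `M` and `E` equals `M` or `E`. -/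
def IsMaximalIdeal {E : Type*} [Lattice E] [AddCommGroup E] [Module ℝ E]
    (M : Submodule ℝ E) : Prop :=
  IsIdeal M ∧ M ≠ ⊤ ∧ ∀ J : Submodule ℝ E, IsIdeal J → M ≤ J → J = M ∨ J = ⊤

/-- An ideal `I` is order dense if its disjoint complement is trivial. -/
def IsOrderDense {E : Type*} [Lattice E] [AddCommGroup E] [Module ℝ E]
    (I : Submodule ℝ E) : Prop :=
  ∀ x : E, (∀ y ∈ I, |x| ⊓ |y| = 0) → x = 0

/-- `a` is an atom of the vector lattice `E`. -/
def IsAtomElem {E : Type*} [Lattice E] [AddCommGroup E] (a : E) : Prop :=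
  0 < a ∧ ∀ x y : E, 0 ≤ x → x ≤ a → 0 ≤ y → y ≤ a → x ⊓ y = 0 → x = 0 ∨ y = 0

/-- The vector lattice `E` is Archimedean. -/
def VLArchimedean (E : Type*) [Lattice E] [AddCommGroup E] : Prop :=
  ∀ x y : E, (∀ n : ℕ, n • x ≤ y) → x ≤ 0

/-- The vector lattice `E` is uniformly complete. -/
def UniformlyComplete (E : Type*) [Lattice E] [AddCommGroup E] [Module ℝ E] : Prop :=
  ∀ e : E, 0 ≤ e → ∀ x : ℕ → E,
    (∀ ε : ℝ, 0 < ε → ∃ N : ℕ, ∀ m n : ℕ, N ≤ m → N ≤ n → |x m - x n| ≤ ε • e) →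
    ∃ l : E, ∀ ε : ℝ, 0 < ε → ∃ N : ℕ, ∀ n : ℕ, N ≤ n → |x n - l| ≤ ε • e

/-- The vector lattice `E` has a strong unit. -/
def HasStrongUnit (E : Type*) [Lattice E] [AddCommGroup E] [Module ℝ E] : Prop :=
  ∃ e : E, 0 ≤ e ∧ ∀ x : E, ∃ c : ℝ, 0 < c ∧ |x| ≤ c • e

/-- The vector lattice `E` is prime Noetherian: every increasing sequence of
prime ideals is eventually constant. -/
def PrimeNoetherian (E : Type*) [Lattice E] [AddCommGroup E] [Module ℝ E] : Prop :=
  ∀ P : ℕ → Submodule ℝ E, (∀ n, IsPrimeIdeal (P n)) → Monotone P →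
    ∃ N : ℕ, ∀ n : ℕ, N ≤ n → P n = P N


section Aux
variable {E : Type*} [Lattice E] [AddCommGroup E] [Module ℝ E]
    [CovariantClass E E (· + ·) (· ≤ ·)] [PosSMulMono ℝ E]

def vlOACM (E : Type*) [Lattice E] [AddCommGroup E]
    [CovariantClass E E (· + ·) (· ≤ ·)] : IsOrderedAddMonoid E :=
  { add_le_add_left := fun _ _ h c => add_le_add_left h c }

lemma vl_abs_def (x : E) : |x| = x ⊔ -x := rfl

lemma vl_smul_nonneg {c : ℝ} (hc : 0 ≤ c) {u : E} (hu : 0 ≤ u) : 0 ≤ c • u := by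
  simpa using smul_le_smul_of_nonneg_left hu hc

lemma vl_smul_le_smul {c d : ℝ} (h : c ≤ d) {u : E} (hu : 0 ≤ u) : c • u ≤ d • u := by
  have h0 : 0 ≤ (d - c) • u := vl_smul_nonneg (by linarith) hu
  calc c • u = c • u + 0 := (add_zero _).symm
    _ ≤ c • u + (d - c) • u := add_le_add_right h0 _
    _ = d • u := by rw [← add_smul]; ring_nf

lemma vl_pos_smul_sup {c : ℝ} (hc : 0 < c) (a b : E) : c • (a ⊔ b) = c • a ⊔ c • b := by
  refine le_antisymm ?_ (sup_le (smul_le_smul_of_nonneg_left le_sup_left hc.le)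
    (smul_le_smul_of_nonneg_left le_sup_right hc.le))
  have h : a ⊔ b ≤ c⁻¹ • (c • a ⊔ c • b) := by
    refine sup_le ?_ ?_
    · have := smul_le_smul_of_nonneg_left (le_sup_left : c • a ≤ c • a ⊔ c • b)
        (inv_nonneg.mpr hc.le)
      rwa [smul_smul, inv_mul_cancel₀ hc.ne', one_smul] at this
    · have := smul_le_smul_of_nonneg_left (le_sup_right : c • b ≤ c • a ⊔ c • b)
        (inv_nonneg.mpr hc.le)
      rwa [smul_smul, inv_mul_cancel₀ hc.ne', one_smul] at this
  have := smul_le_smul_of_nonneg_left h hc.le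
  rwa [smul_smul, mul_inv_cancel₀ hc.ne', one_smul] at this

lemma vl_pos_smul_inf {c : ℝ} (hc : 0 < c) (a b : E) : c • (a ⊓ b) = c • a ⊓ c • b := by
  have h : a ⊓ b = -((-a) ⊔ (-b)) := by rw [neg_sup, neg_neg, neg_neg]
  rw [h, smul_neg, vl_pos_smul_sup hc, neg_sup, smul_neg, smul_neg, neg_neg, neg_neg]

lemma vl_abs_smul (c : ℝ) (x : E) : |c • x| = |c| • |x| := by
  rcases lt_trichotomy c 0 with h | h | h
  · have h0 : c • x = -((-c) • x) := by rw [neg_smul, neg_neg]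
    rw [abs_of_neg h, h0, abs_neg, vl_abs_def ((-c) • x), vl_abs_def x, ← smul_neg,
      ← vl_pos_smul_sup (by linarith)]
  · simp [h]
  · rw [abs_of_pos h, vl_abs_def (c • x), vl_abs_def x, ← smul_neg, ← vl_pos_smul_sup h]

lemma vl_posPart_le_abs (a : E) : a⁺ ≤ |a| := sup_le (le_abs_self a) (abs_nonneg a)

lemma vl_le_of_forall_eps (harch : ∀ x y : E, (∀ n : ℕ, n • x ≤ y) → x ≤ 0)
    {u a b : E} (hu : 0 ≤ u) (h : ∀ ε : ℝ, 0 < ε → a ≤ b + ε • u) : a ≤ b := by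
  have key : ∀ n : ℕ, n • (a - b) ≤ u := by
    intro n
    have hpos : (0:ℝ) < 1 / ((n:ℝ) + 1) := by positivity
    have h1 : a - b ≤ (1 / ((n:ℝ) + 1)) • u := by
      have := h _ hpos; rwa [sub_le_iff_le_add']
    have h2 : (n : ℝ) • (a - b) ≤ (n : ℝ) • ((1 / ((n:ℝ) + 1)) • u) :=
      smul_le_smul_of_nonneg_left h1 (Nat.cast_nonneg n)
    rw [smul_smul] at h2
    calc n • (a - b) = (n : ℝ) • (a - b) := (Nat.cast_smul_eq_nsmul ℝ n _).symm
      _ ≤ ((n : ℝ) * (1 / ((n:ℝ) + 1))) • u := h2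
      _ ≤ (1 : ℝ) • u := vl_smul_le_smul (by
          rw [mul_one_div, div_le_one (by positivity)]; linarith) hu
      _ = u := one_smul _ _
  exact sub_nonpos.mp (harch _ u key)

lemma vl_mem_of_nonneg_le {P : Submodule ℝ E} (hsol : IsIdeal P) {a b : E}
    (ha : 0 ≤ a) (hab : a ≤ b) (hb : b ∈ P) : a ∈ P := by
  have hb0 : 0 ≤ b := ha.trans hab
  exact hsol a b (by rw [abs_of_nonneg ha, abs_of_nonneg hb0]; exact hab) hb

lemma vl_abs_mem {P : Submodule ℝ E} (hsol : IsIdeal P) {a : E} (h : a ∈ P) : |a| ∈ P :=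
  hsol _ _ (le_of_eq (abs_abs a)) h

lemma vl_top_of_unit_mem {P : Submodule ℝ E} (hsol : IsIdeal P) {e : E} (he : 0 ≤ e)
    (hstr : ∀ x : E, ∃ c : ℝ, 0 < c ∧ |x| ≤ c • e) (heP : e ∈ P) : P = ⊤ := by
  rw [Submodule.eq_top_iff']
  intro x
  obtain ⟨c, hc, hxc⟩ := hstr x
  refine hsol x (c • e) ?_ (P.smul_mem c heP)
  rwa [abs_of_nonneg (vl_smul_nonneg hc.le he)]

end Aux

section KeyApprox
set_option linter.unusedSectionVars false
variable {E : Type*} [Lattice E] [AddCommGroup E] [Module ℝ E]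
    [CovariantClass E E (· + ·) (· ≤ ·)] [PosSMulMono ℝ E]

lemma vl_truncation {e y : E} (he : 0 ≤ e) {ε : ℝ} (hε : 0 < ε) :
    |y - ((y - ε • e)⁺ - (-y - ε • e)⁺)| ≤ ε • e := by
  letI : DistribLattice E := AddCommGroup.toDistribLattice E
  have hee : -(ε • e) ≤ ε • e := (neg_nonpos.mpr (vl_smul_nonneg hε.le he)).trans
    (vl_smul_nonneg hε.le he)
  have e1 : (-y - ε • e) + ε • e = -y := by abel
  have e2 : (-y - ε • e) + y = -(ε • e) := by abel
  have key : y - ((y - ε • e)⁺ - (-y - ε • e)⁺) = ((-y) ⊓ (-(ε • e))) ⊔ (ε • e ⊓ y) := by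
    have h1 : y - ((y - ε • e) ⊔ 0) = ε • e ⊓ y := by
      rw [← neg_neg ((y - ε • e) ⊔ 0), neg_sup, sub_eq_add_neg y, neg_neg, add_inf,
        neg_sub, neg_zero, add_sub_cancel, add_zero]
    calc y - ((y - ε • e)⁺ - (-y - ε • e)⁺)
        = (y - ((y - ε • e) ⊔ 0)) + ((-y - ε • e) ⊔ 0) := by
          rw [posPart_def, posPart_def]; abel
      _ = ((-y - ε • e) ⊔ 0) + (ε • e ⊓ y) := by rw [h1, add_comm]
      _ = (((-y - ε • e) + (ε • e ⊓ y)) ⊔ (0 + (ε • e ⊓ y))) := sup_add _ _ _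
      _ = ((-y) ⊓ (-(ε • e))) ⊔ (ε • e ⊓ y) := by
          rw [zero_add, add_inf, e1, e2]
  rw [key]
  refine abs_le'.mpr ⟨sup_le (inf_le_right.trans hee) inf_le_left, ?_⟩
  rw [neg_le]
  calc -(ε • e) = (-(ε • e)) ⊓ |y| := (inf_eq_left.mpr
        ((neg_nonpos.mpr (vl_smul_nonneg hε.le he)).trans (abs_nonneg y))).symm
    _ = (-(ε • e)) ⊓ ((-y) ⊔ y) := by rw [vl_abs_def, sup_comm]
    _ = ((-(ε • e)) ⊓ (-y)) ⊔ ((-(ε • e)) ⊓ y) := inf_sup_left _ _ _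
    _ ≤ ((-y) ⊓ (-(ε • e))) ⊔ (ε • e ⊓ y) :=
        sup_le_sup (le_of_eq (inf_comm _ _)) (inf_le_inf_right _ hee)

lemma vl_keyApprox {P : Submodule ℝ E} (hsol : IsIdeal P)
    (hprime : ∀ x y : E, x ⊓ y ∈ P → x ∈ P ∨ y ∈ P)
    {e : E} (he : 0 ≤ e) (x : E) {c₀ : ℝ} (hx : |x| ≤ c₀ • e) :
    ∃ lam : ℝ, ∀ ε : ℝ, 0 < ε → ∃ p ∈ P, |x - lam • e - p| ≤ ε • e := by
  set D : Set ℝ := {c | (x - c • e)⁺ ∈ P} with hD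
  set U : Set ℝ := {c | (c • e - x)⁺ ∈ P} with hU
  have hDup : ∀ c c' : ℝ, c ≤ c' → c ∈ D → c' ∈ D := by
    intro c c' hcc hc
    have hmono : x - c' • e ≤ x - c • e := sub_le_sub_left (vl_smul_le_smul hcc he) x
    exact vl_mem_of_nonneg_le hsol (posPart_nonneg _) (posPart_mono hmono) hc
  have hUdown : ∀ c c' : ℝ, c' ≤ c → c ∈ U → c' ∈ U := by
    intro c c' hcc hc
    have hmono : c' • e - x ≤ c • e - x := sub_le_sub_right (vl_smul_le_smul hcc he) x
    exact vl_mem_of_nonneg_le hsol (posPart_nonneg _) (posPart_mono hmono) hc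
  have hc₀D : c₀ ∈ D := by
    have h0 : x - c₀ • e ≤ 0 := sub_nonpos.mpr ((le_abs_self x).trans hx)
    show (x - c₀ • e)⁺ ∈ P
    rw [posPart_eq_zero.mpr h0]; exact P.zero_mem
  have hc₀U : (-c₀) ∈ U := by
    have h0 : (-c₀) • e - x ≤ 0 := by
      rw [neg_smul, sub_nonpos, neg_le]
      exact (neg_le_abs x).trans hx
    show ((-c₀) • e - x)⁺ ∈ P
    rw [posPart_eq_zero.mpr h0]; exact P.zero_mem
  by_cases hDU : ∃ c, c ∈ D ∧ c ∈ U
  · obtain ⟨c, hcD, hcU⟩ := hDU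
    have hmem : x - c • e ∈ P := by
      have hnp : (c • e - x)⁺ = (x - c • e)⁻ := by
        rw [posPart_def, negPart_def, neg_sub]
      have hsub : x - c • e = (x - c • e)⁺ - (c • e - x)⁺ := by
        rw [hnp, posPart_sub_negPart]
      rw [hsub]; exact P.sub_mem hcD hcU
    exact ⟨c, fun ε hε => ⟨x - c • e, hmem, by
      simpa using vl_smul_nonneg hε.le he⟩⟩
  · have hbdd : BddBelow D := by
      refine ⟨-c₀, fun c hc => ?_⟩
      by_contra hlt
      push_neg at hlt
      exact hDU ⟨-c₀, hDup c (-c₀) hlt.le hc, hc₀U⟩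
    have hne : D.Nonempty := ⟨c₀, hc₀D⟩
    set lam := sInf D with hlam
    have hDmem : ∀ ε : ℝ, 0 < ε → lam + ε ∈ D := by
      intro ε hε
      obtain ⟨c, hcD, hclt⟩ := exists_lt_of_csInf_lt hne (by linarith : sInf D < lam + ε)
      exact hDup c _ hclt.le hcD
    have hUmem : ∀ ε : ℝ, 0 < ε → lam - ε ∈ U := by
      intro ε hε
      by_contra hnotU
      have hnotD : lam - ε / 2 ∉ D := fun h => by
        have := csInf_le hbdd h; rw [← hlam] at this; linarith
      have hab : (x - (lam - ε/2) • e)⁺ ⊓ ((lam - ε) • e - x)⁺ ∈ P := by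
        have hle : x - (lam - ε/2) • e ≤ -((lam - ε) • e - x) := by
          have : (lam - ε) • e ≤ (lam - ε/2) • e := vl_smul_le_smul (by linarith) he
          have h2 : x - (lam - ε/2) • e ≤ x - (lam - ε) • e := sub_le_sub_left this x
          rwa [neg_sub]
        have h3 : (x - (lam - ε/2) • e)⁺ ≤ ((lam - ε) • e - x)⁻ := by
          calc (x - (lam - ε/2) • e)⁺ ≤ (-((lam - ε) • e - x))⁺ := posPart_mono hle
            _ = ((lam - ε) • e - x)⁻ := posPart_neg _
        have h4 : (x - (lam - ε/2) • e)⁺ ⊓ ((lam - ε) • e - x)⁺ ≤ 0 := by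
          calc (x - (lam - ε/2) • e)⁺ ⊓ ((lam - ε) • e - x)⁺
              ≤ ((lam - ε) • e - x)⁻ ⊓ ((lam - ε) • e - x)⁺ := inf_le_inf_right _ h3
            _ = 0 := by rw [inf_comm]; exact posPart_inf_negPart_eq_zero _
        have h5 : (0:E) ≤ (x - (lam - ε/2) • e)⁺ ⊓ ((lam - ε) • e - x)⁺ :=
          le_inf (posPart_nonneg _) (posPart_nonneg _)
        have : (x - (lam - ε/2) • e)⁺ ⊓ ((lam - ε) • e - x)⁺ = 0 := le_antisymm h4 h5
        rw [this]; exact P.zero_mem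
      rcases hprime _ _ hab with h | h
      · exact hnotD h
      · exact hnotU h
    refine ⟨lam, fun ε hε => ?_⟩
    refine ⟨(x - (lam + ε) • e)⁺ - ((lam - ε) • e - x)⁺,
      P.sub_mem (hDmem ε hε) (hUmem ε hε), ?_⟩
    have e3 : x - (lam + ε) • e = (x - lam • e) - ε • e := by
      rw [add_smul]; abel
    have e4 : (lam - ε) • e - x = -(x - lam • e) - ε • e := by
      rw [sub_smul]; abel
    rw [e3, e4]
    exact vl_truncation he hε

end KeyApprox

section UClose
set_option linter.unusedSectionVars false
variable {E : Type*} [Lattice E] [AddCommGroup E] [Module ℝ E]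
    [CovariantClass E E (· + ·) (· ≤ ·)] [PosSMulMono ℝ E]

/-- The `e`-uniform closure of a submodule. -/
def vlUClose (P : Submodule ℝ E) {e : E} (he : 0 ≤ e) : Submodule ℝ E where
  carrier := {y | ∀ ε : ℝ, 0 < ε → ∃ p ∈ P, |y - p| ≤ ε • e}
  zero_mem' := fun ε hε => ⟨0, P.zero_mem, by simpa using vl_smul_nonneg hε.le he⟩
  add_mem' := by
    intro a b ha hb ε hε
    obtain ⟨p, hp, hap⟩ := ha (ε/2) (by linarith)
    obtain ⟨q, hq, hbq⟩ := hb (ε/2) (by linarith)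
    refine ⟨p + q, P.add_mem hp hq, ?_⟩
    have h1 : a + b - (p + q) = (a - p) + (b - q) := by abel
    calc |a + b - (p + q)| ≤ |a - p| + |b - q| := by rw [h1]; exact abs_add_le _ _
      _ ≤ (ε/2) • e + (ε/2) • e := add_le_add hap hbq
      _ = ε • e := by rw [← add_smul]; ring_nf
  smul_mem' := by
    intro c a ha ε hε
    have hd : (0:ℝ) < |c| + 1 := by positivity
    obtain ⟨p, hp, hap⟩ := ha (ε / (|c| + 1)) (by positivity)
    refine ⟨c • p, P.smul_mem c hp, ?_⟩
    calc |c • a - c • p| = |c| • |a - p| := by rw [← smul_sub, vl_abs_smul]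
      _ ≤ |c| • ((ε / (|c| + 1)) • e) :=
          smul_le_smul_of_nonneg_left hap (abs_nonneg c)
      _ = (|c| * (ε / (|c| + 1))) • e := smul_smul _ _ _
      _ ≤ ε • e := vl_smul_le_smul (by
          rw [mul_div_assoc']
          rw [div_le_iff₀ hd]
          nlinarith [abs_nonneg c]) he

lemma vl_le_uclose (P : Submodule ℝ E) {e : E} (he : 0 ≤ e) : P ≤ vlUClose P he := by
  intro y hy ε hε
  exact ⟨y, hy, by simpa using vl_smul_nonneg hε.le he⟩

lemma vl_uclose_solid {P : Submodule ℝ E} (hsol : IsIdeal P) {e : E} (he : 0 ≤ e) :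
    IsIdeal (vlUClose P he) := by
  intro z y hzy hy ε hε
  obtain ⟨p, hp, hyp⟩ := hy ε hε
  set q : E := (z ⊔ -|p|) ⊓ |p| with hq
  have habs_sub : |y| - |p| ≤ |y - p| := by
    have := abs_abs_sub_abs_le (y) (p)
    calc |y| - |p| ≤ |(|y| - |p|)| := le_abs_self _
      _ ≤ |y - p| := this
  have hqmem : q ∈ P := by
    refine hsol q p ?_ hp
    have h1 : q ≤ |p| := inf_le_right
    have h2 : -q ≤ |p| := by
      have hneg : -q = ((-z) ⊓ |p|) ⊔ (-|p|) := by
        rw [hq, neg_inf, neg_sup, neg_neg]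
      rw [hneg]
      exact sup_le inf_le_right ((neg_nonpos.mpr (abs_nonneg p)).trans (abs_nonneg p))
    exact abs_le'.mpr ⟨h1, h2⟩
  refine ⟨q, hqmem, ?_⟩
  have hkey : z - q = (0 ⊓ (z + |p|)) ⊔ (z - |p|) := by
    have hneg : -q = ((-z) ⊓ |p|) ⊔ (-|p|) := by
      rw [hq, neg_inf, neg_sup, neg_neg]
    calc z - q = z + (((-z) ⊓ |p|) ⊔ (-|p|)) := by rw [sub_eq_add_neg, hneg]
      _ = (z + ((-z) ⊓ |p|)) ⊔ (z + (-|p|)) := add_sup _ _ _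
      _ = ((z + (-z)) ⊓ (z + |p|)) ⊔ (z - |p|) := by rw [add_inf, sub_eq_add_neg]
      _ = (0 ⊓ (z + |p|)) ⊔ (z - |p|) := by rw [add_neg_cancel]
  have hchain : z - |p| ≤ ε • e := by
    calc z - |p| ≤ |z| - |p| := sub_le_sub_right (le_abs_self z) _
      _ ≤ |y| - |p| := sub_le_sub_right hzy _
      _ ≤ |y - p| := habs_sub
      _ ≤ ε • e := hyp
  have hchain2 : -z - |p| ≤ ε • e := by
    calc -z - |p| ≤ |z| - |p| := sub_le_sub_right (neg_le_abs z) _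
      _ ≤ |y| - |p| := sub_le_sub_right hzy _
      _ ≤ |y - p| := habs_sub
      _ ≤ ε • e := hyp
  rw [hkey]
  refine abs_le'.mpr ⟨?_, ?_⟩
  · exact sup_le (inf_le_left.trans (vl_smul_nonneg hε.le he)) hchain
  · rw [neg_le]
    refine le_sup_of_le_left ?_
    have hrw : 0 ⊓ (z + |p|) = -(0 ⊔ (-z - |p|)) := by
      rw [neg_sup, neg_zero]
      congr 1
      abel
    rw [hrw, neg_le_neg_iff]
    exact sup_le (vl_smul_nonneg hε.le he) hchain2

lemma vl_uclose_not_mem_unit {P : Submodule ℝ E} (hsol : IsIdeal P) (hPne : P ≠ ⊤)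
    {e : E} (he : 0 ≤ e) (hstr : ∀ x : E, ∃ c : ℝ, 0 < c ∧ |x| ≤ c • e) :
    e ∉ vlUClose P he := by
  intro h
  obtain ⟨p, hp, hpe⟩ := h (1/2) (by norm_num)
  have h1 : (1/2 : ℝ) • e ≤ p := by
    have h2 : e - p ≤ (1/2 : ℝ) • e := (le_abs_self _).trans hpe
    have h3 : e - (1/2 : ℝ) • e = (1/2 : ℝ) • e := by
      rw [← one_smul ℝ e, smul_smul, ← sub_smul]
      norm_num
    calc (1/2 : ℝ) • e = e - (1/2 : ℝ) • e := h3.symm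
      _ ≤ p := by
        rw [sub_le_iff_le_add']
        rw [sub_le_iff_le_add] at h2
        exact h2
  have hhalf : (1/2 : ℝ) • e ∈ P :=
    vl_mem_of_nonneg_le hsol (vl_smul_nonneg (by norm_num) he) h1 hp
  have heP : e ∈ P := by
    have := P.smul_mem 2 hhalf
    rwa [smul_smul, (by norm_num : (2:ℝ) * (1/2) = 1), one_smul] at this
  exact hPne (vl_top_of_unit_mem hsol he hstr heP)
end UClose

section Gap
set_option linter.unusedSectionVars false
variable {E : Type*} [Lattice E] [AddCommGroup E] [Module ℝ E]
    [CovariantClass E E (· + ·) (· ≤ ·)] [PosSMulMono ℝ E]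

lemma vl_sub_inf (a b c : E) : a - (b ⊓ c) = (a - b) ⊔ (a - c) := by
  rw [sub_eq_add_neg, neg_inf, add_sup, ← sub_eq_add_neg, ← sub_eq_add_neg]

lemma vl_gap {P : Submodule ℝ E} (hsol : IsIdeal P)
    (hprime : ∀ x y : E, x ⊓ y ∈ P → x ∈ P ∨ y ∈ P)
    (harch : ∀ x y : E, (∀ n : ℕ, n • x ≤ y) → x ≤ 0)
    (huc : ∀ e : E, 0 ≤ e → ∀ x : ℕ → E,
      (∀ ε : ℝ, 0 < ε → ∃ N : ℕ, ∀ m n : ℕ, N ≤ m → N ≤ n → |x m - x n| ≤ ε • e) →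
      ∃ l : E, ∀ ε : ℝ, 0 < ε → ∃ N : ℕ, ∀ n : ℕ, N ≤ n → |x n - l| ≤ ε • e)
    {u v : E} (hv0 : 0 ≤ v) (hvP : v ∉ P) (hu0 : 0 ≤ u) (huP : u ∉ P)
    (hvu : ∀ n : ℕ, ((n : ℝ) • v - u)⁺ ∈ P) :
    ∃ w : E, 0 ≤ w ∧ w ∉ P ∧ (∀ n : ℕ, ((n : ℝ) • v - w)⁺ ∈ P) ∧
      (∀ n : ℕ, ((n : ℝ) • w - u)⁺ ∈ P) := by
  letI : IsOrderedAddMonoid E := vlOACM E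
  set t : ℕ → E := fun k => v ⊓ ((1/2 : ℝ) ^ (k+1)) • u with ht
  set S : ℕ → E := fun m => ∑ k ∈ Finset.range m, t k with hS
  have htpos : ∀ k, 0 ≤ t k := fun k => le_inf hv0 (vl_smul_nonneg (by positivity) hu0)
  have hgeo : ∀ m n : ℕ, m ≤ n →
      ∑ k ∈ Finset.Ico m n, (1/2 : ℝ) ^ (k+1) = (1/2)^m - (1/2)^n := by
    intro m n h
    induction n, h using Nat.le_induction with
    | base => simp
    | succ n hn ih =>
      rw [Finset.sum_Ico_succ_top hn, ih, pow_succ]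
      ring
  have hSle : ∀ m : ℕ, S m ≤ (m : ℝ) • v := by
    intro m
    calc S m ≤ ∑ _k ∈ Finset.range m, v := by
          rw [hS]
          exact Finset.sum_le_sum (fun k _ => inf_le_left)
      _ = m • v := by rw [Finset.sum_const, Finset.card_range]
      _ = (m : ℝ) • v := (Nat.cast_smul_eq_nsmul ℝ m v).symm
  have hdiff : ∀ m n : ℕ, m ≤ n → 0 ≤ S n - S m ∧ S n - S m ≤ ((1/2 : ℝ)^m) • u := by
    intro m n h
    have hs : S n - S m = ∑ k ∈ Finset.Ico m n, t k := by
      rw [hS, Finset.sum_Ico_eq_sub _ h]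
    constructor
    · rw [hs]; exact Finset.sum_nonneg (fun k _ => htpos k)
    · rw [hs]
      calc ∑ k ∈ Finset.Ico m n, t k ≤ ∑ k ∈ Finset.Ico m n, ((1/2 : ℝ)^(k+1)) • u :=
            Finset.sum_le_sum (fun k _ => inf_le_right)
        _ = (∑ k ∈ Finset.Ico m n, (1/2 : ℝ)^(k+1)) • u := (Finset.sum_smul).symm
        _ ≤ ((1/2 : ℝ)^m) • u := by
            refine vl_smul_le_smul ?_ hu0
            rw [hgeo m n h]
            have : (0:ℝ) ≤ (1/2)^n := by positivity
            linarith
  have hcauchy : ∀ ε : ℝ, 0 < ε → ∃ N : ℕ, ∀ m n : ℕ, N ≤ m → N ≤ n →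
      |S m - S n| ≤ ε • u := by
    intro ε hε
    obtain ⟨N, hN⟩ := exists_pow_lt_of_lt_one hε (by norm_num : (1/2 : ℝ) < 1)
    refine ⟨N, fun m n hm hn => ?_⟩
    have key : ∀ a b : ℕ, N ≤ a → a ≤ b → |S b - S a| ≤ ε • u := by
      intro a b ha hab
      obtain ⟨h1, h2⟩ := hdiff a b hab
      rw [abs_of_nonneg h1]
      refine h2.trans (vl_smul_le_smul ?_ hu0)
      calc (1/2 : ℝ)^a ≤ (1/2)^N :=
            pow_le_pow_of_le_one (by norm_num) (by norm_num) ha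
        _ ≤ ε := hN.le
    rcases le_total m n with h | h
    · rw [abs_sub_comm]; exact key m n hm h
    · exact key n m hn h
  obtain ⟨w, hw⟩ := huc u hu0 S hcauchy
  have hge : ∀ m : ℕ, S m ≤ w := by
    intro m
    refine vl_le_of_forall_eps harch hu0 (fun ε hε => ?_)
    obtain ⟨N, hN⟩ := hw ε hε
    have h1 : S (max N m) ≤ w + ε • u := by
      have := hN (max N m) (le_max_left _ _)
      have h2 : S (max N m) - w ≤ ε • u := (le_abs_self _).trans this
      exact sub_le_iff_le_add'.mp h2
    exact ((sub_nonneg.mp (hdiff m (max N m) (le_max_right _ _)).1).trans h1)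
  have hub : ∀ m : ℕ, w ≤ (m : ℝ) • v + ((1/2 : ℝ)^m) • u := by
    intro m
    have hSn : ∀ n : ℕ, S n ≤ (m : ℝ) • v + ((1/2 : ℝ)^m) • u := by
      intro n
      rcases le_total n m with h | h
      · refine (hSle n).trans ?_
        refine le_add_of_le_of_nonneg ?_ (vl_smul_nonneg (by positivity) hu0)
        exact vl_smul_le_smul (by exact_mod_cast h) hv0
      · have h1 := (hdiff m n h).2
        have h2 : S n = S m + (S n - S m) := by abel
        rw [h2]
        exact add_le_add (hSle m) h1
    refine vl_le_of_forall_eps harch hu0 (fun ε hε => ?_)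
    obtain ⟨N, hN⟩ := hw ε hε
    have h1 : w - S N ≤ ε • u := by
      have h0 : w - S N ≤ |S N - w| := by rw [abs_sub_comm]; exact le_abs_self _
      exact h0.trans (hN N le_rfl)
    exact (sub_le_iff_le_add'.mp h1).trans (add_le_add_left (hSn N) _)
  have hgem : ∀ m : ℕ, (m : ℝ) • (v ⊓ ((1/2 : ℝ)^m) • u) ≤ w := by
    intro m
    have h1 : (m : ℝ) • (v ⊓ ((1/2 : ℝ)^m) • u) ≤ S m := by
      calc (m : ℝ) • (v ⊓ ((1/2 : ℝ)^m) • u) = m • (v ⊓ ((1/2 : ℝ)^m) • u) :=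
            Nat.cast_smul_eq_nsmul ℝ m _
        _ = ∑ _k ∈ Finset.range m, (v ⊓ ((1/2 : ℝ)^m) • u) := by
            rw [Finset.sum_const, Finset.card_range]
        _ ≤ S m := Finset.sum_le_sum (fun k hk => le_inf inf_le_left (inf_le_right.trans
            (vl_smul_le_smul (pow_le_pow_of_le_one (by norm_num) (by norm_num)
              (Finset.mem_range.mp hk)) hu0)))
    exact h1.trans (hge m)
  have hS0 : S 0 = 0 := Finset.sum_range_zero _
  have hw0 : 0 ≤ w := by
    have := hge 0
    rwa [hS0] at this
  have hwP : w ∉ P := by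
    intro hwin
    have hS1nn : 0 ≤ S 1 := Finset.sum_nonneg (fun k _ => htpos k)
    have hS1 : S 1 ∈ P := vl_mem_of_nonneg_le hsol hS1nn (hge 1) hwin
    have hS1eq : S 1 = v ⊓ ((1/2 : ℝ)^(0+1)) • u := by
      rw [hS]; exact Finset.sum_range_one _
    rw [hS1eq] at hS1
    rcases hprime _ _ hS1 with h | h
    · exact hvP h
    · refine huP ?_
      have h2 := P.smul_mem 2 h
      rwa [smul_smul, (by norm_num : (2:ℝ) * (1/2)^(0+1) = 1), one_smul] at h2
  have hvw : ∀ n : ℕ, ((n : ℝ) • v - w)⁺ ∈ P := by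
    intro n
    set m : ℕ := n + 1 with hm
    set c : ℝ := (m : ℝ) * (1/2)^m with hc
    have hcpos : 0 < c := by positivity
    have h2 : (m : ℝ) • (v ⊓ ((1/2 : ℝ)^m) • u) = ((m : ℝ) • v) ⊓ (c • u) := by
      rw [vl_pos_smul_inf (by positivity), smul_smul]
    have h3 : (n : ℝ) • v - w ≤ ((n : ℝ) • v - (m : ℝ) • v) ⊔ ((n : ℝ) • v - c • u) := by
      have h4 : (n : ℝ) • v - w ≤ (n : ℝ) • v - (((m : ℝ) • v) ⊓ (c • u)) :=
        sub_le_sub_left (h2 ▸ hgem m) _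
      rwa [vl_sub_inf] at h4
    have hXneg : (n : ℝ) • v - (m : ℝ) • v ≤ 0 := by
      rw [← sub_smul]
      have he : (n : ℝ) - (m : ℝ) = -1 := by rw [hm]; push_cast; ring
      rw [he, neg_smul, one_smul]
      exact neg_nonpos.mpr hv0
    set K : ℕ := ⌈(n : ℝ) / c⌉₊ with hK
    have hZmem : c • (((K : ℝ) • v - u)⁺) ∈ P := P.smul_mem c (hvu K)
    have hZnn : 0 ≤ c • (((K : ℝ) • v - u)⁺) := vl_smul_nonneg hcpos.le (posPart_nonneg _)
    have hY : (n : ℝ) • v - c • u ≤ c • (((K : ℝ) • v - u)⁺) := by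
      have hYeq : (n : ℝ) • v - c • u = c • (((n : ℝ)/c) • v - u) := by
        rw [smul_sub, smul_smul, mul_div_cancel₀ _ hcpos.ne']
      rw [hYeq]
      refine smul_le_smul_of_nonneg_left ?_ hcpos.le
      refine le_trans ?_ (le_posPart _)
      refine sub_le_sub_right (vl_smul_le_smul ?_ hv0) u
      exact Nat.le_ceil _
    have h5 : ((n : ℝ) • v - w)⁺ ≤ c • (((K : ℝ) • v - u)⁺) := by
      have h6 : ((n : ℝ) • v - w)⁺ ≤ ((n : ℝ) • v - c • u)⁺ := by
        calc ((n : ℝ) • v - w)⁺ ≤ (((n : ℝ) • v - (m : ℝ) • v) ⊔ ((n : ℝ) • v - c • u))⁺ :=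
              posPart_mono h3
          _ ≤ (0 ⊔ ((n : ℝ) • v - c • u))⁺ := posPart_mono (sup_le_sup_right hXneg _)
          _ = ((n : ℝ) • v - c • u)⁺ := by
              rw [sup_comm 0 _, ← posPart_def, posPart_eq_self.mpr (posPart_nonneg _)]
      exact h6.trans (sup_le hY hZnn)
    exact vl_mem_of_nonneg_le hsol (posPart_nonneg _) h5 hZmem
  have hwu : ∀ n : ℕ, ((n : ℝ) • w - u)⁺ ∈ P := by
    intro n
    obtain ⟨m, hmlt⟩ := exists_pow_lt_of_lt_one
      (show (0:ℝ) < 1/(2*((n:ℝ)+1)) by positivity) (by norm_num : (1/2 : ℝ) < 1)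
    have hsmall : (n : ℝ) * (1/2)^m ≤ 1/2 := by
      have hn0 : (0:ℝ) ≤ (n:ℝ) := Nat.cast_nonneg n
      have hp0 : (0:ℝ) ≤ (1/2 : ℝ)^m := by positivity
      have key : (1/2 : ℝ)^m * (2*((n:ℝ)+1)) < 1 :=
        (lt_div_iff₀ (by positivity : (0:ℝ) < 2*((n:ℝ)+1))).mp hmlt
      nlinarith [key, hp0, hn0]
    have h1 : (n : ℝ) • w ≤ ((n : ℝ)*(m : ℝ)) • v + ((n : ℝ)*(1/2)^m) • u := by
      calc (n : ℝ) • w ≤ (n : ℝ) • ((m : ℝ) • v + ((1/2 : ℝ)^m) • u) :=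
            smul_le_smul_of_nonneg_left (hub m) (Nat.cast_nonneg n)
        _ = ((n : ℝ)*(m : ℝ)) • v + ((n : ℝ)*(1/2)^m) • u := by
            rw [smul_add, smul_smul, smul_smul]
    have e5 : (n : ℝ) • w - u ≤ ((n : ℝ)*(m : ℝ)) • v + (((n : ℝ)*(1/2)^m) - 1) • u := by
      have h6 := sub_le_sub_right h1 u
      rw [sub_smul, one_smul, ← add_sub_assoc]
      exact h6
    have e6 : (((n : ℝ)*(1/2)^m) - 1) • u ≤ (-(1/2) : ℝ) • u :=
      vl_smul_le_smul (by linarith) hu0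
    have e7 : (n : ℝ) • w - u ≤ ((n : ℝ)*(m : ℝ)) • v + (-(1/2) : ℝ) • u :=
      e5.trans (add_le_add_right e6 _)
    set K : ℕ := 2 * n * m with hK
    have e8 : ((n : ℝ)*(m : ℝ)) • v + (-(1/2) : ℝ) • u = (1/2 : ℝ) • ((K : ℝ) • v - u) := by
      have hKc : (1/2 : ℝ) * (K : ℝ) = (n : ℝ) * (m : ℝ) := by rw [hK]; push_cast; ring
      rw [smul_sub, smul_smul, hKc, neg_smul, ← sub_eq_add_neg]
    have hZmem : (1/2 : ℝ) • (((K : ℝ) • v - u)⁺) ∈ P := P.smul_mem _ (hvu K)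
    have hZnn : 0 ≤ (1/2 : ℝ) • (((K : ℝ) • v - u)⁺) :=
      vl_smul_nonneg (by norm_num) (posPart_nonneg _)
    have h9 : ((n : ℝ) • w - u)⁺ ≤ (1/2 : ℝ) • (((K : ℝ) • v - u)⁺) := by
      refine sup_le ?_ hZnn
      refine e7.trans ?_
      rw [e8]
      exact smul_le_smul_of_nonneg_left (le_posPart _) (by norm_num)
    exact vl_mem_of_nonneg_le hsol (posPart_nonneg _) h9 hZmem
  exact ⟨w, hw0, hwP, hvw, hwu⟩
end Gap

section Chain
set_option linter.unusedSectionVars false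
variable {E : Type*} [Lattice E] [AddCommGroup E] [Module ℝ E]
    [CovariantClass E E (· + ·) (· ≤ ·)] [PosSMulMono ℝ E]

/-- `a` is infinitesimal with respect to `b` modulo `P`. -/
def vlRel (P : Submodule ℝ E) (a b : E) : Prop := ∀ n : ℕ, ((n : ℝ) • a - b)⁺ ∈ P

lemma vl_rel_trans {P : Submodule ℝ E} (hsol : IsIdeal P) {a b c : E}
    (h1 : vlRel P a b) (h2 : vlRel P b c) : vlRel P a c := by
  intro n
  have hb : (b - c)⁺ ∈ P := by
    have := h2 1; rwa [Nat.cast_one, one_smul] at this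
  have hsum : ((n : ℝ) • a - b)⁺ + (b - c)⁺ ∈ P := P.add_mem (h1 n) hb
  have hle : ((n : ℝ) • a - c)⁺ ≤ ((n : ℝ) • a - b)⁺ + (b - c)⁺ := by
    refine sup_le ?_ (add_nonneg (posPart_nonneg _) (posPart_nonneg _))
    calc (n : ℝ) • a - c = ((n : ℝ) • a - b) + (b - c) := by abel
      _ ≤ _ := add_le_add (le_posPart _) (le_posPart _)
  exact vl_mem_of_nonneg_le hsol (posPart_nonneg _) hle hsum

lemma vl_rel_coef {b x : E} (hb0 : 0 ≤ b) (c δ : ℝ) (hc : 0 ≤ c) (hδ : 0 < δ)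
    (N : ℕ) (hN : c ≤ δ * N) (hN0 : 0 < N) :
    c • x ≤ δ • b + (c / N) • (((N : ℝ) • x - b)⁺) := by
  have hNR : (0:ℝ) < (N : ℝ) := by exact_mod_cast hN0
  have h2 : (N : ℝ) • x ≤ b + ((N : ℝ) • x - b)⁺ := sub_le_iff_le_add'.mp (le_posPart _)
  calc c • x = (c / N) • ((N : ℝ) • x) := by
        rw [smul_smul, div_mul_cancel₀ _ hNR.ne']
    _ ≤ (c / N) • (b + ((N : ℝ) • x - b)⁺) := by
        exact smul_le_smul_of_nonneg_left h2 (div_nonneg hc (Nat.cast_nonneg _))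
    _ = (c / N) • b + (c / N) • (((N : ℝ) • x - b)⁺) := smul_add _ _ _
    _ ≤ δ • b + (c / N) • (((N : ℝ) • x - b)⁺) := by
        refine add_le_add_left (vl_smul_le_smul ?_ hb0) _
        rw [div_le_iff₀ hNR]
        linarith [hN]

lemma vl_abs_sum (s : Finset ℕ) (f : ℕ → E) : |∑ i ∈ s, f i| ≤ ∑ i ∈ s, |f i| := by
  classical
  induction s using Finset.cons_induction with
  | empty => simp
  | cons a s ha ih =>
    rw [Finset.sum_cons, Finset.sum_cons]
    exact (abs_add_le _ _).trans (add_le_add_right ih _)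

set_option maxHeartbeats 1000000 in
lemma vl_indep {P : Submodule ℝ E} (hsol : IsIdeal P) (W : ℕ → E)
    (hW0 : ∀ i, 0 ≤ W i) (hWP : ∀ i, W i ∉ P)
    (hchain : ∀ j i : ℕ, j < i → vlRel P (W i) (W j)) :
    LinearIndependent ℝ (fun i : ℕ => Submodule.Quotient.mk (p := P) (W i)) := by
  letI : IsOrderedAddMonoid E := vlOACM E
  rw [linearIndependent_iff']
  intro s g hsum
  by_contra hc
  push_neg at hc
  obtain ⟨i0, hi0s, hi0⟩ := hc
  classical
  set s' := s.filter (fun i => g i ≠ 0) with hs'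
  have hs'ne : s'.Nonempty := ⟨i0, Finset.mem_filter.mpr ⟨hi0s, hi0⟩⟩
  set j := s'.min' hs'ne with hj
  have hjs' : j ∈ s' := s'.min'_mem hs'ne
  have hjs : j ∈ s := (Finset.mem_filter.mp hjs').1
  have hgj : g j ≠ 0 := (Finset.mem_filter.mp hjs').2
  have hq : (∑ i ∈ s, g i • W i) ∈ P := by
    have hmk : P.mkQ (∑ i ∈ s, g i • W i) = 0 := by
      rw [map_sum]
      simp only [map_smul]
      exact hsum
    rwa [Submodule.mkQ_apply, Submodule.Quotient.mk_eq_zero] at hmk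
  set a := |g j| with ha
  have ha0 : 0 < a := by rw [ha]; exact abs_pos.mpr hgj
  set T := s.filter (fun i => j < i) with hT
  set k := T.card with hk
  clear_value a k
  have hδ : (0:ℝ) < a / (k + 1) := by positivity
  have hjT : j ∉ T := by
    intro h
    exact absurd ((Finset.mem_filter.mp h).2) (lt_irrefl j)
  have hsplit : ∑ i ∈ s, g i • W i = g j • W j + ∑ i ∈ T, g i • W i := by
    have hsub : insert j T ⊆ s := by
      intro i hi
      rcases Finset.mem_insert.mp hi with h | h
      · exact h ▸ hjs
      · exact (Finset.mem_filter.mp h).1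
    have hzero : ∀ i ∈ s, i ∉ insert j T → g i • W i = 0 := by
      intro i his hnot
      have hij : i ≠ j := fun h => hnot (Finset.mem_insert.mpr (Or.inl h))
      have hnlt : ¬ j < i := fun h => hnot (Finset.mem_insert.mpr
        (Or.inr (Finset.mem_filter.mpr ⟨his, h⟩)))
      have hilt : i < j := by omega
      have : g i = 0 := by
        by_contra hgi
        have : i ∈ s' := Finset.mem_filter.mpr ⟨his, hgi⟩
        have := s'.min'_le i this
        omega
      rw [this, zero_smul]
    rw [← Finset.sum_subset hsub hzero, Finset.sum_insert hjT]
  -- the coefficient functions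
  set Ni : ℕ → ℕ := fun i => ⌈|g i| / (a / (k + 1))⌉₊ + 1 with hNi
  set r : ℕ → E := fun i => (|g i| / (Ni i)) • (((Ni i : ℝ) • W i - W j)⁺) with hr
  have hri0 : ∀ i, 0 ≤ r i := fun i => vl_smul_nonneg (div_nonneg (abs_nonneg _) (Nat.cast_nonneg _)) (posPart_nonneg _)
  have hriP : ∀ i ∈ T, r i ∈ P := by
    intro i hi
    exact P.smul_mem _ (hchain j i (Finset.mem_filter.mp hi).2 (Ni i))
  have hrile : ∀ i ∈ T, |g i| • W i ≤ (a / (k+1)) • W j + r i := by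
    intro i hi
    have hNige : |g i| / (a/(k+1)) ≤ (Ni i : ℝ) := by
      calc |g i| / (a/(k+1)) ≤ (⌈|g i| / (a / (k + 1))⌉₊ : ℝ) := Nat.le_ceil _
        _ ≤ (Ni i : ℝ) := by rw [hNi]; push_cast; linarith
    have hN : |g i| ≤ (a/(k+1)) * (Ni i) := by
      have h2 := mul_le_mul_of_nonneg_right hNige hδ.le
      rwa [div_mul_cancel₀ _ hδ.ne', mul_comm] at h2
    exact vl_rel_coef (hW0 j) (|g i|) (a/(k+1)) (abs_nonneg _) hδ (Ni i) hN (Nat.succ_pos _)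
  have hbound : a • W j ≤ |∑ i ∈ s, g i • W i| + ∑ i ∈ T, |g i| • W i := by
    have h1 : a • W j = |g j • W j| := by rw [ha, vl_abs_smul, abs_of_nonneg (hW0 j)]
    have h2 : g j • W j = (∑ i ∈ s, g i • W i) - ∑ i ∈ T, g i • W i := by
      rw [hsplit]; abel
    have h3 : |g j • W j| ≤ |∑ i ∈ s, g i • W i| + |∑ i ∈ T, g i • W i| := by
      rw [h2, sub_eq_add_neg]
      exact (abs_add_le _ _).trans (by rw [abs_neg])
    have h4 : |∑ i ∈ T, g i • W i| ≤ ∑ i ∈ T, |g i| • W i := by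
      refine (vl_abs_sum T _).trans ?_
      refine Finset.sum_le_sum (fun i _ => ?_)
      rw [vl_abs_smul, abs_of_nonneg (hW0 i)]
    rw [h1]
    exact h3.trans (add_le_add_right h4 _)
  set R := ∑ i ∈ T, r i with hR
  have hRP : R ∈ P := Submodule.sum_mem P hriP
  have hsum2 : ∑ i ∈ T, |g i| • W i ≤ ((k : ℝ) * (a / (k+1))) • W j + R := by
    calc ∑ i ∈ T, |g i| • W i ≤ ∑ i ∈ T, ((a / (k+1)) • W j + r i) :=
          Finset.sum_le_sum hrile
      _ = ∑ _i ∈ T, (a / (k+1)) • W j + R := by rw [Finset.sum_add_distrib]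
      _ = ((k : ℝ) * (a / (k+1))) • W j + R := by
          rw [Finset.sum_const, ← hk, ← Nat.cast_smul_eq_nsmul ℝ k ((a / (k+1)) • W j),
            smul_smul]
  have hfinal : (a / (k+1)) • W j ≤ |∑ i ∈ s, g i • W i| + R := by
    have h5 : a • W j ≤ |∑ i ∈ s, g i • W i| + (((k : ℝ) * (a / (k+1))) • W j + R) :=
      hbound.trans (add_le_add_right hsum2 _)
    have h6 : a • W j - ((k : ℝ) * (a / (k+1))) • W j ≤ |∑ i ∈ s, g i • W i| + R := by
      rw [sub_le_iff_le_add]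
      calc a • W j ≤ |∑ i ∈ s, g i • W i| + (((k : ℝ) * (a / (k+1))) • W j + R) := h5
        _ = |∑ i ∈ s, g i • W i| + R + ((k : ℝ) * (a / (k+1))) • W j := by abel
    have hk0 : ((k:ℝ)+1) ≠ 0 := Nat.cast_add_one_ne_zero k
    have hsc : a - (k : ℝ) * (a / ((k:ℝ)+1)) = a / ((k:ℝ)+1) := by
      field_simp
      ring
    have h7 : a • W j - ((k : ℝ) * (a / (k+1))) • W j = (a / (k+1)) • W j := by
      rw [← sub_smul, hsc]
    rwa [h7] at h6
  have hmem : (a / (k+1)) • W j ∈ P := by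
    refine vl_mem_of_nonneg_le hsol (vl_smul_nonneg hδ.le (hW0 j)) hfinal ?_
    exact P.add_mem (vl_abs_mem hsol hq) hRP
  have hWjP : W j ∈ P := by
    have h8 := P.smul_mem (((k:ℝ)+1) / a) hmem
    have hcc : ((k:ℝ)+1)/a * (a/((k:ℝ)+1)) = 1 := by
      field_simp
    rwa [smul_smul, hcc, one_smul] at h8
  exact hWP j hWjP
end Chain

theorem statement11 (E : Type*) [Lattice E] [AddCommGroup E] [Module ℝ E]
    [CovariantClass E E (· + ·) (· ≤ ·)] [PosSMulMono ℝ E]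
    (harch : VLArchimedean E) (huc : UniformlyComplete E) (hsu : HasStrongUnit E)
    (P : Submodule ℝ E) (hP : IsPrimeIdeal P) :
    IsMaximalIdeal P ↔ FiniteDimensional ℝ (E ⧸ P) := by

  obtain ⟨hsol, hPne, hprime⟩ := hP
  obtain ⟨e, he, hstr'⟩ := hsu
  have hrep0 : (∀ y ∈ vlUClose P he, y ∈ P) → ∀ x : E, ∃ lam : ℝ, x - lam • e ∈ P := by
    intro hM x
    obtain ⟨c₀, _, hc₀⟩ := hstr' x
    obtain ⟨lam, hlam⟩ := vl_keyApprox hsol hprime he x hc₀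
    exact ⟨lam, hM _ (fun ε hε => hlam ε hε)⟩
  constructor
  · rintro ⟨_, _, hmax⟩
    have hMP : ∀ y ∈ vlUClose P he, y ∈ P := by
      rcases hmax (vlUClose P he) (vl_uclose_solid hsol he) (vl_le_uclose P he) with h | h
      · intro y hy; rwa [h] at hy
      · exfalso
        refine vl_uclose_not_mem_unit hsol hPne he hstr' ?_
        rw [h]; trivial
    have hrep := hrep0 hMP
    have hsurj : Function.Surjective
        (LinearMap.toSpanSingleton ℝ (E ⧸ P) (Submodule.Quotient.mk e)) := by
      intro z
      obtain ⟨x, rfl⟩ := Submodule.Quotient.mk_surjective P z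
      obtain ⟨lam, hlam⟩ := hrep x
      refine ⟨lam, ?_⟩
      have h0 : Submodule.Quotient.mk (p := P) (x - lam • e) = 0 :=
        (Submodule.Quotient.mk_eq_zero P).mpr hlam
      have h2 : Submodule.Quotient.mk (p := P) x = Submodule.Quotient.mk (p := P) (lam • e) := by
        rwa [Submodule.Quotient.mk_sub, sub_eq_zero] at h0
      rw [LinearMap.toSpanSingleton_apply, h2, Submodule.Quotient.mk_smul]
    exact Module.Finite.of_surjective _ hsurj
  · intro hFD
    refine ⟨hsol, hPne, ?_⟩
    have heP : e ∉ P := fun h => hPne (vl_top_of_unit_mem hsol he hstr' h)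
    have hMeqP : ∀ y ∈ vlUClose P he, y ∈ P := by
      by_contra hcon
      push_neg at hcon
      obtain ⟨y, hyM, hyP⟩ := hcon
      have hv0 : 0 ≤ |y| := abs_nonneg y
      have hvM : |y| ∈ vlUClose P he :=
        vl_uclose_solid hsol he (|y|) y (le_of_eq (abs_abs y)) hyM
      have hvP : |y| ∉ P := fun h => hyP (hsol y (|y|) (le_of_eq (abs_abs y).symm) h)
      have hvll : vlRel P (|y|) e := by
        intro n
        obtain ⟨p, hp, hvp⟩ := hvM (1/((n:ℝ)+1)) (by positivity)
        set q : E := (p ⊔ 0) ⊓ |y| with hq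
        have hq0 : 0 ≤ q := le_inf le_sup_right hv0
        have hqP : q ∈ P := by
          refine hsol q p ?_ hp
          rw [abs_of_nonneg hq0]
          exact inf_le_left.trans (sup_le (le_abs_self p) (abs_nonneg p))
        have hvq : |y| - q ≤ (1/((n:ℝ)+1)) • e := by
          have h1 : |y| - q = (|y| - (p ⊔ 0)) ⊔ 0 := by
            rw [hq, vl_sub_inf, sub_self]
          rw [h1]
          refine sup_le ?_ (vl_smul_nonneg (by positivity) he)
          calc |y| - (p ⊔ 0) ≤ |y| - p := sub_le_sub_left le_sup_left _
            _ ≤ |(|y|) - p| := le_abs_self _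
            _ ≤ _ := hvp
        have h2 : (n:ℝ) • |y| ≤ (n:ℝ) • q + ((n:ℝ)/((n:ℝ)+1)) • e := by
          calc (n:ℝ) • |y| = (n:ℝ) • (q + (|y| - q)) := by rw [add_sub_cancel]
            _ ≤ (n:ℝ) • (q + (1/((n:ℝ)+1)) • e) :=
                smul_le_smul_of_nonneg_left (add_le_add_right hvq q) (Nat.cast_nonneg n)
            _ = (n:ℝ) • q + ((n:ℝ)*(1/((n:ℝ)+1))) • e := by rw [smul_add, smul_smul]
            _ = (n:ℝ) • q + ((n:ℝ)/((n:ℝ)+1)) • e := by rw [mul_one_div]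
        have h3 : (n:ℝ) • |y| - e ≤ (n:ℝ) • q := by
          have h4 : ((n:ℝ)/((n:ℝ)+1)) • e ≤ e := by
            calc ((n:ℝ)/((n:ℝ)+1)) • e ≤ (1:ℝ) • e := vl_smul_le_smul (by
                  rw [div_le_one (by positivity)]; linarith) he
              _ = e := one_smul _ _
          calc (n:ℝ) • |y| - e ≤ ((n:ℝ) • q + ((n:ℝ)/((n:ℝ)+1)) • e) - e :=
                sub_le_sub_right h2 e
            _ ≤ ((n:ℝ) • q + e) - e := sub_le_sub_right (add_le_add_right h4 _) e
            _ = (n:ℝ) • q := by abel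
        refine vl_mem_of_nonneg_le hsol (posPart_nonneg _) ?_
          (vl_abs_mem hsol (P.smul_mem (n:ℝ) hqP))
        exact sup_le (h3.trans (le_abs_self _)) (abs_nonneg _)
      have hInvE : 0 ≤ e ∧ e ∉ P ∧ vlRel P (|y|) e := ⟨he, heP, hvll⟩
      have hstep : ∀ x : E, (0 ≤ x ∧ x ∉ P ∧ vlRel P (|y|) x) →
          ∃ z : E, (0 ≤ z ∧ z ∉ P ∧ vlRel P (|y|) z) ∧ vlRel P z x := by
        rintro x ⟨hx0, hxP, hvx⟩
        obtain ⟨w, hw0, hwP, h1, h2⟩ := vl_gap hsol hprime harch huc hv0 hvP hx0 hxP hvx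
        exact ⟨w, ⟨hw0, hwP, h1⟩, h2⟩
      choose F hF1 hF2 using hstep
      let g : ℕ → {x : E // 0 ≤ x ∧ x ∉ P ∧ vlRel P (|y|) x} :=
        fun i => Nat.rec ⟨e, hInvE⟩ (fun _ p => ⟨F p.1 p.2, hF1 p.1 p.2⟩) i
      have hlink : ∀ i : ℕ, vlRel P (g (i+1)).1 (g i).1 := fun i => hF2 (g i).1 (g i).2
      have hchain : ∀ j i : ℕ, j < i → vlRel P ((g i).1) ((g j).1) := by
        intro j i hji
        induction i with
        | zero => omega
        | succ i ih =>
          rcases Nat.lt_succ_iff_lt_or_eq.mp hji with h | h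
          · exact vl_rel_trans hsol (hlink i) (ih h)
          · subst h; exact hlink j
      have hli := vl_indep hsol (fun i => (g i).1) (fun i => (g i).2.1)
        (fun i => (g i).2.2.1) hchain
      have hli2 := hli.comp (Fin.val : Fin (Module.finrank ℝ (E ⧸ P) + 1) → ℕ)
        Fin.val_injective
      have hcard := hli2.fintype_card_le_finrank
      rw [Fintype.card_fin] at hcard
      omega
    intro J _hJsol hPJ
    by_cases hJP : J = P
    · exact Or.inl hJP
    · right
      have hex : ∃ z ∈ J, z ∉ P := by
        by_contra hc; push_neg at hc
        exact hJP (le_antisymm hc hPJ)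
      obtain ⟨z, hzJ, hzP⟩ := hex
      have hrep := hrep0 hMeqP
      obtain ⟨lam, hlam⟩ := hrep z
      have hlam0 : lam ≠ 0 := by
        intro h
        rw [h, zero_smul, sub_zero] at hlam
        exact hzP hlam
      have heJ : e ∈ J := by
        have h1 : lam • e ∈ J := by
          have h2 : lam • e = z - (z - lam • e) := by abel
          rw [h2]
          exact J.sub_mem hzJ (hPJ hlam)
        have h3 := J.smul_mem lam⁻¹ h1
        rwa [smul_smul, inv_mul_cancel₀ hlam0, one_smul] at h3
      rw [Submodule.eq_top_iff']
      intro x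
      obtain ⟨lam2, hlam2⟩ := hrep x
      have h4 : x = (x - lam2 • e) + lam2 • e := by abel
      rw [h4]
      exact J.add_mem (hPJ hlam2) (J.smul_mem lam2 heJ)
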